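/- Let T be a symmetric 3-tensor on R^d (i.e., T_{ijk} invariant under permutation of indices) and u ~ N(0, I_d). Then E[(Σ_{i,j,k} T_{ijk} u_i u_j u_k)^2 ||u||^2] = 9(d+6) Σ_k (Σ_i T_{iik})^2 + 6(d+6) Σ_{i,j,k} T_{ijk}^2. -/

import Mathlib

/-!
Everything follows from Gaussian integration by parts, `E[u_i p(u)] = E[∂_i p(u)]` for
polynomials `p`. Applied to `u_n · (u_n p)` and summed over `n`, together with Euler's identity
`Σ u_n ∂_n p = (deg p) p`, it gives `E[‖u‖² p] = (d + deg p) E[p]` for homogeneous `p`, whence the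
factor `d + 6`. Writing the cubic form as `p = Σ_i u_i q_i(u)`, symmetry of `T` gives
`∂_i p = 3 q_i`, and two more integrations by parts evaluate `E[p²] = 9 Σ_k v_k² + 6 Σ T_{ijk}²`,
where `v_k = Σ_i T_{iik}`.
-/

open MeasureTheory ProbabilityTheory

/-- The standard Gaussian measure on `ℝ^d`, with i.i.d. `N(0,1)` coordinates. -/
noncomputable def stdGaussian (d : ℕ) : Measure (Fin d → ℝ) :=
  Measure.pi fun _ => gaussianReal 0 1

namespace ProbabilityTheory

lemma hasDerivAt_gaussianPDFReal_zero_one (x : ℝ) :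
    HasDerivAt (gaussianPDFReal 0 1) (-(x * gaussianPDFReal 0 1 x)) x := by
  have h : HasDerivAt (fun y : ℝ => -y ^ 2 / 2) (-x) x :=
    ((hasDerivAt_pow 2 x).neg.div_const 2).congr_deriv (by norm_num; ring)
  have hpdf : gaussianPDFReal 0 1 = fun y => (√(2 * Real.pi))⁻¹ * Real.exp (-y ^ 2 / 2) := by
    funext y; simp [gaussianPDFReal]
  rw [hpdf]
  exact (h.exp.const_mul _).congr_deriv (by ring)

lemma integrable_pow_gaussianReal (n : ℕ) :
    Integrable (fun x : ℝ => x ^ n) (gaussianReal 0 1) :=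
  (integrable_norm_iff (by fun_prop)).1 <| by
    simpa [norm_pow] using (memLp_id_gaussianReal (μ := 0) (v := 1) n).integrable_norm_pow'

lemma integrable_pow_mul_gaussianPDFReal (n : ℕ) :
    Integrable (fun x : ℝ => x ^ n * gaussianPDFReal 0 1 x) := by
  have h := integrable_pow_gaussianReal n
  rw [gaussianReal_of_var_ne_zero 0 one_ne_zero, integrable_withDensity_iff_integrable_smul'
    (measurable_gaussianPDF 0 1) (ae_of_all _ fun _ => gaussianPDF_lt_top)] at h
  refine h.congr (ae_of_all _ fun x => ?_)
  simp [gaussianPDF, ENNReal.toReal_ofReal (gaussianPDFReal_nonneg 0 1 x), mul_comm]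

/-- Stein's identity `E[x f(x)] = E[f'(x)]` for `f = x ^ k`; at `k = 0` the truncated `k - 1` is
harmless because of the factor `k`. -/
lemma integral_pow_succ_gaussianReal (k : ℕ) :
    ∫ x, x ^ (k + 1) ∂gaussianReal 0 1 = k * ∫ x, x ^ (k - 1) ∂gaussianReal 0 1 := by
  simp only [integral_gaussianReal_eq_integral_smul one_ne_zero, smul_eq_mul]
  have h := integral_mul_deriv_eq_deriv_mul_of_integrable (u := fun x : ℝ => x ^ k)
    (v := fun x => -gaussianPDFReal 0 1 x) (u' := fun x => k * x ^ (k - 1))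
    (v' := fun x => x * gaussianPDFReal 0 1 x)
    (fun x _ => hasDerivAt_pow k x)
    (fun x _ => (hasDerivAt_gaussianPDFReal_zero_one x).neg.congr_deriv (neg_neg _))
    (by simpa [Pi.mul_def, pow_succ, mul_assoc] using integrable_pow_mul_gaussianPDFReal (k + 1))
    (by simpa [Pi.mul_def, mul_assoc] using
      ((integrable_pow_mul_gaussianPDFReal (k - 1)).const_mul (k : ℝ)).neg)
    (by simpa [Pi.mul_def] using (integrable_pow_mul_gaussianPDFReal k).neg)
  simp only [mul_neg, integral_neg, neg_neg] at h
  rw [← integral_const_mul]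
  convert h using 1 <;> (congr 1; funext x; ring)

end ProbabilityTheory

namespace MvPolynomial

variable {ι : Type*} [Fintype ι]

lemma integral_eval_monomial (s : ι →₀ ℕ) (c : ℝ) :
    ∫ u, eval u (monomial s c) ∂(Measure.pi fun _ : ι => gaussianReal 0 1)
      = c * ∏ i, ∫ x, x ^ s i ∂gaussianReal 0 1 := by
  simp only [eval_monomial, Finsupp.prod_fintype _ _ (fun _ => pow_zero _), integral_const_mul,
    integral_fintype_prod_eq_prod (fun i x => x ^ s i)]

lemma integrable_eval (p : MvPolynomial ι ℝ) :
    Integrable (fun u => eval u p) (Measure.pi fun _ : ι => gaussianReal 0 1) := by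
  induction p using induction_on' with
  | monomial s c =>
    simpa only [eval_monomial, Finsupp.prod_fintype _ _ (fun _ => pow_zero _)] using
      (Integrable.fintype_prod (f := fun i x => x ^ s i)
        fun _ => integrable_pow_gaussianReal _).const_mul c
  | add p q hp hq =>
    simp only [map_add]
    exact hp.add hq

variable (ι) in
noncomputable def gaussianExpectation : MvPolynomial ι ℝ →ₗ[ℝ] ℝ where
  toFun p := ∫ u, eval u p ∂(Measure.pi fun _ : ι => gaussianReal 0 1)
  map_add' p q := by
    simp only [map_add]
    exact integral_add (integrable_eval p) (integrable_eval q)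
  map_smul' c p := by simp only [smul_eval, integral_const_mul, RingHom.id_apply, smul_eq_mul]

lemma gaussianExpectation_apply (p : MvPolynomial ι ℝ) :
    gaussianExpectation ι p = ∫ u, eval u p ∂(Measure.pi fun _ : ι => gaussianReal 0 1) :=
  rfl

lemma prod_integral_pow_single_add (s : ι →₀ ℕ) (i : ι) :
    ∏ m, ∫ x, x ^ (Finsupp.single i 1 + s : ι →₀ ℕ) m ∂gaussianReal 0 1
      = s i * ∏ m, ∫ x, x ^ (s - Finsupp.single i 1 : ι →₀ ℕ) m ∂gaussianReal 0 1 := by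
  classical
  rw [Fintype.prod_eq_mul_prod_compl i, Fintype.prod_eq_mul_prod_compl i, ← mul_assoc]
  congr 1
  · simp [add_comm 1, integral_pow_succ_gaussianReal]
  · refine Finset.prod_congr rfl fun m hm => ?_
    have hmi : i ≠ m := fun h => by simp_all
    simp [hmi]

lemma gaussianExpectation_X_mul (i : ι) (p : MvPolynomial ι ℝ) :
    gaussianExpectation ι (X i * p) = gaussianExpectation ι (pderiv i p) := by
  induction p using induction_on' with
  | monomial s c =>
    simp only [gaussianExpectation_apply, X, monomial_mul, one_mul, pderiv_monomial,
      integral_eval_monomial, prod_integral_pow_single_add]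
    ring
  | add p q hp hq => simp only [mul_add, map_add, hp, hq]

lemma gaussianExpectation_C (c : ℝ) : gaussianExpectation ι (C c) = c := by
  simp [gaussianExpectation_apply]

lemma gaussianExpectation_sum_X_sq_mul {p : MvPolynomial ι ℝ} {n : ℕ} (hp : p.IsHomogeneous n) :
    gaussianExpectation ι ((∑ i, X i ^ 2) * p)
      = (Fintype.card ι + n) * gaussianExpectation ι p := by
  have hstein : ∀ i, gaussianExpectation ι (X i ^ 2 * p)
      = gaussianExpectation ι (p + X i * pderiv i p) := fun i => by
    rw [sq, mul_assoc, gaussianExpectation_X_mul, Derivation.leibniz, pderiv_X_self, smul_eq_mul,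
      smul_eq_mul, mul_one, add_comm]
  calc gaussianExpectation ι ((∑ i, X i ^ 2) * p)
      = ∑ i, (gaussianExpectation ι p + gaussianExpectation ι (X i * pderiv i p)) := by
        simp only [Finset.sum_mul, map_sum, hstein, map_add]
    _ = Fintype.card ι * gaussianExpectation ι p
          + gaussianExpectation ι (∑ i, X i * pderiv i p) := by
        simp [Finset.sum_add_distrib, map_sum]
    _ = (Fintype.card ι + n) * gaussianExpectation ι p := by
        rw [hp.sum_X_mul_pderiv, map_nsmul, nsmul_eq_mul]
        ring

/-! The forms are nested, `cubicForm T = Σ_i X_i * quadraticForm (T i)`, so that Stein's identity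
applies to them directly. -/

noncomputable def linearForm (a : ι → ℝ) : MvPolynomial ι ℝ := ∑ i, C (a i) * X i

noncomputable def quadraticForm (A : ι → ι → ℝ) : MvPolynomial ι ℝ := ∑ i, X i * linearForm (A i)

noncomputable def cubicForm (T : ι → ι → ι → ℝ) : MvPolynomial ι ℝ := ∑ i, X i * quadraticForm (T i)

lemma isHomogeneous_linearForm (a : ι → ℝ) : (linearForm a).IsHomogeneous 1 :=
  IsHomogeneous.sum _ _ _ fun i _ => isHomogeneous_C_mul_X (a i) i

lemma isHomogeneous_quadraticForm (A : ι → ι → ℝ) : (quadraticForm A).IsHomogeneous 2 :=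
  IsHomogeneous.sum _ _ _ fun i _ => (isHomogeneous_X ℝ i).mul (isHomogeneous_linearForm (A i))

lemma isHomogeneous_cubicForm (T : ι → ι → ι → ℝ) : (cubicForm T).IsHomogeneous 3 :=
  IsHomogeneous.sum _ _ _ fun i _ => (isHomogeneous_X ℝ i).mul (isHomogeneous_quadraticForm (T i))

lemma pderiv_linearForm (a : ι → ℝ) (l : ι) : pderiv l (linearForm a) = C (a l) := by
  classical
  simp [linearForm, Pi.single_apply]

lemma pderiv_quadraticForm (A : ι → ι → ℝ) (l : ι) :
    pderiv l (quadraticForm A) = linearForm (A l) + linearForm (fun i => A i l) := by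
  classical
  simp only [quadraticForm, map_sum, Derivation.leibniz, pderiv_linearForm, pderiv_X,
    Pi.single_apply, smul_eq_mul, mul_ite, mul_one, mul_zero, Finset.sum_add_distrib,
    Finset.sum_ite_eq', Finset.mem_univ, if_true]
  simp only [linearForm, mul_comm, add_comm]

lemma pderiv_cubicForm {T : ι → ι → ι → ℝ}
    (hT : ∀ i j k, T i j k = T j i k ∧ T i j k = T i k j) (l : ι) :
    pderiv l (cubicForm T) = (3 : ℝ) • quadraticForm (T l) := by
  classical
  have h₁ : (fun i j => T i l j) = T l := by funext i j; exact (hT i l j).1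
  have h₂ : (fun i j => T i j l) = T l := by funext i j; exact ((hT i j l).2.trans (hT i l j).1)
  have h : pderiv l (cubicForm T) = quadraticForm (fun i => T i l)
      + quadraticForm (fun i j => T i j l) + quadraticForm (T l) := by
    simp only [cubicForm, map_sum, Derivation.leibniz, pderiv_quadraticForm, pderiv_X,
      Pi.single_apply, smul_eq_mul, mul_add, Finset.sum_add_distrib, mul_ite, mul_one, mul_zero,
      Finset.sum_ite_eq', Finset.mem_univ, if_true]
    rfl
  rw [h, h₁, h₂]
  module

lemma gaussianExpectation_linearForm_mul (a : ι → ℝ) (p : MvPolynomial ι ℝ) :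
    gaussianExpectation ι (linearForm a * p) = ∑ i, a i * gaussianExpectation ι (pderiv i p) := by
  simp only [linearForm, Finset.sum_mul, map_sum, ← smul_eq_C_mul, smul_mul_assoc,
    map_smul, gaussianExpectation_X_mul, smul_eq_mul]

lemma gaussianExpectation_linearForm_mul_linearForm (a b : ι → ℝ) :
    gaussianExpectation ι (linearForm a * linearForm b) = ∑ i, a i * b i := by
  simp [gaussianExpectation_linearForm_mul, pderiv_linearForm, gaussianExpectation_C]

lemma gaussianExpectation_quadraticForm (A : ι → ι → ℝ) :
    gaussianExpectation ι (quadraticForm A) = ∑ i, A i i := by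
  simp [quadraticForm, gaussianExpectation_X_mul, pderiv_linearForm, gaussianExpectation_C]

lemma gaussianExpectation_quadraticForm_mul_quadraticForm (A B : ι → ι → ℝ) :
    gaussianExpectation ι (quadraticForm A * quadraticForm B)
      = (∑ i, A i i) * (∑ i, B i i) + ∑ i, ∑ j, A i j * (B i j + B j i) := by
  have hsplit : quadraticForm A * quadraticForm B
      = ∑ i, X i * (linearForm (A i) * quadraticForm B) := by
    simp only [quadraticForm, Finset.sum_mul, mul_assoc]
  simp only [hsplit, map_sum, gaussianExpectation_X_mul, Derivation.leibniz, smul_eq_mul,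
    pderiv_quadraticForm, pderiv_linearForm, mul_add, map_add, mul_comm (quadraticForm B),
    C_mul', map_smul, gaussianExpectation_linearForm_mul_linearForm,
    gaussianExpectation_quadraticForm, Finset.sum_add_distrib, Finset.sum_mul]
  ring

lemma gaussianExpectation_linearForm_mul_cubicForm {T : ι → ι → ι → ℝ}
    (hT : ∀ i j k, T i j k = T j i k ∧ T i j k = T i k j) (a : ι → ℝ) :
    gaussianExpectation ι (linearForm a * cubicForm T) = 3 * ∑ l, a l * ∑ i, T l i i := by
  simp [gaussianExpectation_linearForm_mul, pderiv_cubicForm hT, gaussianExpectation_quadraticForm,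
    Finset.mul_sum, mul_left_comm]

lemma gaussianExpectation_cubicForm_sq {T : ι → ι → ι → ℝ}
    (hT : ∀ i j k, T i j k = T j i k ∧ T i j k = T i k j) :
    gaussianExpectation ι (cubicForm T ^ 2)
      = 9 * ∑ k, (∑ i, T i i k) ^ 2 + 6 * ∑ i, ∑ j, ∑ k, T i j k ^ 2 := by
  set v : ι → ℝ := fun k => ∑ i, T i i k
  have hsplit : cubicForm T ^ 2 = ∑ i, X i * (quadraticForm (T i) * cubicForm T) := by
    simp only [sq, cubicForm, Finset.sum_mul, mul_assoc]
  have htrace : ∀ l, ∑ i, T l i i = v l := fun l =>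
    Finset.sum_congr rfl fun i _ => (hT l i i).1.trans ((hT i l i).2)
  have hquad : ∀ i, gaussianExpectation ι (quadraticForm (T i) * quadraticForm (T i))
      = v i ^ 2 + 2 * ∑ j, ∑ k, T i j k ^ 2 := fun i => by
    simp only [gaussianExpectation_quadraticForm_mul_quadraticForm, htrace, ← (hT i _ _).2]
    simp only [sq, Finset.mul_sum]
    ring_nf
  have hlin : ∀ i, gaussianExpectation ι (cubicForm T * pderiv i (quadraticForm (T i)))
      = 6 * ∑ l, T i i l * v l := fun i => by
    have hdiag : (fun j => T i j i) = T i i := by funext j; exact (hT i j i).2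
    rw [pderiv_quadraticForm, hdiag, mul_comm, add_mul, map_add,
      gaussianExpectation_linearForm_mul_cubicForm hT]
    simp only [htrace]
    ring
  have hcross : ∑ i, ∑ l, T i i l * v l = ∑ l, v l ^ 2 := by
    rw [Finset.sum_comm]
    simp only [sq, v, Finset.sum_mul]
  calc gaussianExpectation ι (cubicForm T ^ 2)
      = ∑ i, (3 * gaussianExpectation ι (quadraticForm (T i) * quadraticForm (T i))
          + gaussianExpectation ι (cubicForm T * pderiv i (quadraticForm (T i)))) := by
        rw [hsplit, map_sum]
        refine Finset.sum_congr rfl fun i _ => ?_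
        rw [gaussianExpectation_X_mul, Derivation.leibniz, pderiv_cubicForm hT, smul_eq_mul,
          smul_eq_mul, mul_smul_comm, map_add, map_smul, smul_eq_mul]
    _ = 9 * ∑ k, v k ^ 2 + 6 * ∑ i, ∑ j, ∑ k, T i j k ^ 2 := by
        simp only [hquad, hlin, Finset.sum_add_distrib, ← Finset.mul_sum, hcross]
        ring

lemma eval_cubicForm (T : ι → ι → ι → ℝ) (u : ι → ℝ) :
    eval u (cubicForm T) = ∑ i, ∑ j, ∑ k, T i j k * u i * u j * u k := by
  simp only [cubicForm, quadraticForm, linearForm, map_sum, map_mul, eval_X, eval_C,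
    Finset.mul_sum]
  refine Fintype.sum_congr _ _ fun i => Fintype.sum_congr _ _ fun j =>
    Fintype.sum_congr _ _ fun k => ?_
  ring

end MvPolynomial

theorem gaussian_cubic_form_second_moment (d : ℕ) (T : Fin d → Fin d → Fin d → ℝ)
    (hsymm : ∀ i j k : Fin d, T i j k = T j i k ∧ T i j k = T i k j) :
    ∫ u, (∑ i, ∑ j, ∑ k, T i j k * u i * u j * u k) ^ 2 * (∑ n, (u n) ^ 2)
        ∂(stdGaussian d)
      = 9 * (d + 6 : ℝ) * ∑ k, (∑ i, T i i k) ^ 2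
        + 6 * (d + 6 : ℝ) * ∑ i, ∑ j, ∑ k, (T i j k) ^ 2 := by
  open MvPolynomial in
  calc ∫ u, (∑ i, ∑ j, ∑ k, T i j k * u i * u j * u k) ^ 2 * (∑ n, (u n) ^ 2) ∂(stdGaussian d)
      = gaussianExpectation (Fin d) ((∑ n, X n ^ 2) * cubicForm T ^ 2) := by
        simp only [gaussianExpectation_apply, map_mul, map_pow, map_sum, eval_X, eval_cubicForm,
          mul_comm (∑ n : Fin d, _)]
        rfl
    _ = (d + 6) * gaussianExpectation (Fin d) (cubicForm T ^ 2) := by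
        rw [gaussianExpectation_sum_X_sq_mul ((isHomogeneous_cubicForm T).pow 2), Fintype.card_fin]
        norm_num
    _ = _ := by
        rw [gaussianExpectation_cubicForm_sq hsymm]
        ring
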